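/- Suppose r(x^0,·) and P^0(x^0,·) are continuous on P(X×U) for every x^0 ∈ X^0. Then any bounded function Q : X^0 × H → ℝ satisfying the Bellman equation Q(x^0,h) = r(x^0, G(μ0,h)) + γ ∑_{y∈X^0} P^0(x^0, G(μ0,h))(y) · sup_{h'∈H} Q(y,h') for all x^0 ∈ X^0 and h ∈ H is continuous on X^0 × H (with X^0 discrete and H carrying the supremum metric); in particular, Q(x^0_n, h_n) → Q(x^0, h) whenever x^0_n → x^0 and h_n → h. -/

import Mathlib

open Finset Filter Topology

/-- The state-action distribution `G(μ,h)(x,u) = h(x)(u)·μ(x)` induced by a state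
distribution `μ` and a decision rule `h ∈ 𝓗 = {h : X → 𝒫(U)}`. -/
noncomputable def jointG {X U : Type*} [Fintype X] [Fintype U]
    (μ : ↥(stdSimplex ℝ X)) (h : X → ↥(stdSimplex ℝ U)) :
    ↥(stdSimplex ℝ (X × U)) :=
  ⟨fun p => (h p.1).1 p.2 * μ.1 p.1,
   ⟨fun p => mul_nonneg ((h p.1).2.1 p.2) (μ.2.1 p.1), by
    calc ∑ p : X × U, (h p.1).1 p.2 * μ.1 p.1
        = ∑ x : X, ∑ u : U, (h x).1 u * μ.1 x := by rw [Fintype.sum_prod_type]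
      _ = ∑ x : X, (∑ u : U, (h x).1 u) * μ.1 x := by
          simp [Finset.sum_mul]
      _ = 1 := by
          simp only [fun x : X => (h x).2.2, one_mul]
          exact μ.2.2⟩⟩

/-! The right-hand side of the Bellman equation depends on `h` only through `G(μ0,h)`, and
continuously so, because the value `sup_{h'} Q(y,h')` of each successor state is a constant.
Hence every section `Q(x⁰,·)` is continuous, and since `X⁰` is discrete so is `Q`. -/

theorem continuous_jointG {X U : Type*} [Fintype X] [Fintype U] (μ : ↥(stdSimplex ℝ X)) :
    Continuous (jointG (U := U) μ) := by
  refine Continuous.subtype_mk (continuous_pi fun p => ?_) _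
  have hcoord : Continuous fun h : X → ↥(stdSimplex ℝ U) => (h p.1).1 p.2 :=
    (continuous_apply p.2).comp (continuous_subtype_val.comp (continuous_apply p.1))
  exact hcoord.mul continuous_const

theorem continuous_reward_add_discounted_expectation {S Y : Type*} [TopologicalSpace S]
    [Fintype Y] {r : S → ℝ} (hr : Continuous r) {P : S → ↥(stdSimplex ℝ Y)}
    (hP : Continuous P) (γ : ℝ) (V : Y → ℝ) :
    Continuous fun s => r s + γ * ∑ y, (P s).1 y * V y := by
  refine hr.add (continuous_const.mul (continuous_finsetSum _ fun y _ => ?_))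
  exact ((continuous_apply y).comp (continuous_subtype_val.comp hP)).mul continuous_const

theorem bellman_solution_continuous_general
    {X U X0 : Type*} [Fintype X] [Fintype U] [Fintype X0]
    [TopologicalSpace X0] [DiscreteTopology X0]
    (μ0 : ↥(stdSimplex ℝ X))
    (P0 : X0 → ↥(stdSimplex ℝ (X × U)) → ↥(stdSimplex ℝ X0))
    (r : X0 → ↥(stdSimplex ℝ (X × U)) → ℝ)
    (γ : ℝ)
    (hr : ∀ x0, Continuous (r x0)) (hP0 : ∀ x0, Continuous (P0 x0))
    (Q : X0 → (X → ↥(stdSimplex ℝ U)) → ℝ)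
    (hBell : ∀ x0 h, Q x0 h
      = r x0 (jointG μ0 h) + γ * ∑ y : X0, (P0 x0 (jointG μ0 h)).1 y *
          ⨆ h' : X → ↥(stdSimplex ℝ U), Q y h') :
    Continuous (fun p : X0 × (X → ↥(stdSimplex ℝ U)) => Q p.1 p.2) ∧
    ∀ (xs : ℕ → X0) (hs : ℕ → X → ↥(stdSimplex ℝ U))
      (x0 : X0) (h : X → ↥(stdSimplex ℝ U)),
      Tendsto xs atTop (𝓝 x0) → Tendsto hs atTop (𝓝 h) →
      Tendsto (fun n => Q (xs n) (hs n)) atTop (𝓝 (Q x0 h)) := by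
  have hsection : ∀ x0, Continuous (Q x0) := fun x0 => by
    rw [funext (hBell x0)]
    exact (continuous_reward_add_discounted_expectation (hr x0) (hP0 x0) γ
      fun y => ⨆ h', Q y h').comp (continuous_jointG μ0)
  have hQ : Continuous fun p : X0 × (X → ↥(stdSimplex ℝ U)) => Q p.1 p.2 :=
    continuous_prod_of_discrete_left.mpr hsection
  exact ⟨hQ, fun xs hs x0 h hxs hhs => (hQ.tendsto (x0, h)).comp (hxs.prodMk_nhds hhs)⟩

/-- Suppose `r(x⁰,·)` and `P⁰(x⁰,·)` are continuous on `𝒫(X×U)` for every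
`x⁰ ∈ X⁰`. Then any bounded function `Q : X⁰ × 𝓗 → ℝ` satisfying the Bellman equation
`Q(x⁰,h) = r(x⁰, G(μ0,h)) + γ ∑_y P⁰(x⁰, G(μ0,h))(y) · sup_{h'} Q(y,h')`
is continuous on `X⁰ × 𝓗` (with `X⁰` discrete and `𝓗` carrying the supremum metric, whose
topology on the finite product coincides with the product topology used here); in
particular, `Q(x⁰_n, h_n) → Q(x⁰, h)` whenever `x⁰_n → x⁰` and `h_n → h`. -/
theorem bellman_solution_continuous
    {X U X0 : Type*} [Fintype X] [Fintype U] [Fintype X0]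
    [Nonempty X] [Nonempty U] [Nonempty X0]
    [TopologicalSpace X0] [DiscreteTopology X0]
    (μ0 : ↥(stdSimplex ℝ X))
    (P0 : X0 → ↥(stdSimplex ℝ (X × U)) → ↥(stdSimplex ℝ X0))
    (r : X0 → ↥(stdSimplex ℝ (X × U)) → ℝ)
    (γ : ℝ) (hγ : γ ∈ Set.Ioo (0 : ℝ) 1)
    (hr : ∀ x0, Continuous (r x0)) (hP0 : ∀ x0, Continuous (P0 x0))
    (Q : X0 → (X → ↥(stdSimplex ℝ U)) → ℝ)
    (hQbd : ∃ C : ℝ, ∀ x0 h, |Q x0 h| ≤ C)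
    (hBell : ∀ x0 h, Q x0 h
      = r x0 (jointG μ0 h) + γ * ∑ y : X0, (P0 x0 (jointG μ0 h)).1 y *
          ⨆ h' : X → ↥(stdSimplex ℝ U), Q y h') :
    Continuous (fun p : X0 × (X → ↥(stdSimplex ℝ U)) => Q p.1 p.2) ∧
    ∀ (xs : ℕ → X0) (hs : ℕ → X → ↥(stdSimplex ℝ U))
      (x0 : X0) (h : X → ↥(stdSimplex ℝ U)),
      Tendsto xs atTop (𝓝 x0) → Tendsto hs atTop (𝓝 h) →
      Tendsto (fun n => Q (xs n) (hs n)) atTop (𝓝 (Q x0 h)) :=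
  bellman_solution_continuous_general μ0 P0 r γ hr hP0 Q hBell
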